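/- For all g, g' ∈ G and all z ∈ ℂ, the mapping J satisfies the chain rule J(gg', z) = exp(2i·φ_ρ(g,g'))·J(g, g'·z)·J(g', z). -/

import Mathlib

noncomputable section

open Complex

/-- The group `G = 𝕋 ⋉ ℂ`, with elements `[a,b]`, acting on `ℂ` by `z ↦ a z + b`. -/
@[ext]
structure GT : Type where
  a : Circle
  b : ℂ

namespace GT

instance : Group GT where
  mul g h := ⟨g.a * h.a, (g.a : ℂ) * h.b + g.b⟩
  one := ⟨1, 0⟩
  inv g := ⟨g.a⁻¹, -((g.a⁻¹ : ℂ) * g.b)⟩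
  mul_assoc g h k := by
    refine GT.ext (mul_assoc _ _ _) ?_
    show ((g.a * h.a : Circle) : ℂ) * k.b + ((g.a : ℂ) * h.b + g.b)
        = (g.a : ℂ) * ((h.a : ℂ) * k.b + h.b) + g.b
    push_cast; ring
  one_mul g := by
    refine GT.ext (one_mul _) ?_
    show ((1 : Circle) : ℂ) * g.b + 0 = g.b
    simp
  mul_one g := by
    refine GT.ext (mul_one _) ?_
    show (g.a : ℂ) * 0 + g.b = g.b
    simp
  inv_mul_cancel g := by
    refine GT.ext (inv_mul_cancel _) ?_
    show ((g.a⁻¹ : Circle) : ℂ) * g.b + -(((g.a : ℂ))⁻¹ * g.b) = 0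
    push_cast; ring

/-- The action of `G` on `ℂ` : `[a,b]·z = a z + b`. -/
def act (g : GT) (z : ℂ) : ℂ := (g.a : ℂ) * z + g.b

end GT

/-- The Hermitian product `⟨z,w⟩ = z·conj w`. -/
def herm (z w : ℂ) : ℂ := z * (starRingEnd ℂ) w

/-- The automorphic factor `j^α(g,z) = exp(2 i α Im⟨z, g⁻¹·0⟩)`. -/
def jfac (α : ℝ) (g : GT) (z : ℂ) : ℂ :=
  Complex.exp (2 * Complex.I * (α : ℂ) * ((herm z (GT.act g⁻¹ 0)).im : ℂ))

/-- The Wirtinger derivative `∂f/∂z = (1/2)(∂f/∂x − i ∂f/∂y)`. -/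
def wderiv (f : ℂ → ℂ) (z : ℂ) : ℂ :=
  (1 / 2 : ℂ) * (fderiv ℝ f z 1 - Complex.I * fderiv ℝ f z Complex.I)

/-- The anti-Wirtinger derivative `∂f/∂z̄ = (1/2)(∂f/∂x + i ∂f/∂y)`. -/
def wderivBar (f : ℂ → ℂ) (z : ℂ) : ℂ :=
  (1 / 2 : ℂ) * (fderiv ℝ f z 1 + Complex.I * fderiv ℝ f z Complex.I)

/-- The Euclidean Laplacian `Δ = 4 ∂²/∂z∂z̄`. -/
def lap (f : ℂ → ℂ) (z : ℂ) : ℂ := 4 * wderiv (fun w => wderivBar f w) z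

/-- `S(z) = ν z + μ (τ(z)·∂τ̄/∂z̄(z) − τ̄(z)·∂τ/∂z̄(z))`. -/
def Sfun (ν μ : ℝ) (τ : ℂ → ℂ) (z : ℂ) : ℂ :=
  (ν : ℂ) * z + (μ : ℂ) *
    (τ z * wderivBar (fun w => (starRingEnd ℂ) (τ w)) z - (starRingEnd ℂ) (τ z) * wderivBar τ z)

/-- `B(z) = ν + μ(|∂τ/∂z(z)|² − |∂τ/∂z̄(z)|²)`. -/
def Bfun (ν μ : ℝ) (τ : ℂ → ℂ) (z : ℂ) : ℝ :=
  ν + μ * (‖wderiv τ z‖ ^ 2 - ‖wderivBar τ z‖ ^ 2)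

/-- The magnetic Schrödinger operator `L`. -/
def Lop (ν μ : ℝ) (τ : ℂ → ℂ) (f : ℂ → ℂ) (z : ℂ) : ℂ :=
  - wderiv (fun w => wderivBar f w) z
    - (Sfun ν μ τ z * wderiv f z - (starRingEnd ℂ) (Sfun ν μ τ z) * wderivBar f z)
    + ((‖Sfun ν μ τ z‖ : ℝ) : ℂ) ^ 2 * f z
    - ((μ : ℂ) / 4) *
        (τ z * lap (fun w => (starRingEnd ℂ) (τ w)) z - (starRingEnd ℂ) (τ z) * lap τ z) * f z

/-- The annihilation operator `A f = ∂f/∂z̄ + S f`. -/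
def Aop (ν μ : ℝ) (τ : ℂ → ℂ) (f : ℂ → ℂ) (z : ℂ) : ℂ :=
  wderivBar f z + Sfun ν μ τ z * f z

/-- The creation operator `Ã f = −∂f/∂z + conj(S) f`. -/
def Atop (ν μ : ℝ) (τ : ℂ → ℂ) (f : ℂ → ℂ) (z : ℂ) : ℂ :=
  - wderiv f z + (starRingEnd ℂ) (Sfun ν μ τ z) * f z

/-- `J(g,z) = j^ν(g,z)·j^μ(ρ(g),τ(z))`. -/
def Jfun (ν μ : ℝ) (ρ : GT → GT) (τ : ℂ → ℂ) (g : GT) (z : ℂ) : ℂ :=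
  jfac ν g z * jfac μ (ρ g) (τ z)

/-- `φ_ρ(g,g') = Im(ν⟨g⁻¹·0,g'·0⟩ + μ⟨ρ(g⁻¹)·0, ρ(g')·0⟩)`. -/
def phiRho (ν μ : ℝ) (ρ : GT → GT) (g g' : GT) : ℝ :=
  ((ν : ℂ) * herm (GT.act g⁻¹ 0) (GT.act g' 0)
    + (μ : ℂ) * herm (GT.act (ρ g⁻¹) 0) (GT.act (ρ g') 0)).im

/-- Membership in the lattice `Γ = ℤω₁ + ℤω₂`. -/
def inLattice (ω₁ ω₂ : ℂ) (γ : ℂ) : Prop := ∃ m n : ℤ, γ = (m : ℂ) * ω₁ + (n : ℂ) * ω₂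

/-- Mixed `Γ`-automorphic form of type `(ν,μ)` w.r.t. the pair `(ρ,τ)`. -/
def MixedForm (ν μ : ℝ) (ρ : GT → GT) (τ : ℂ → ℂ) (ω₁ ω₂ : ℂ) (F : ℂ → ℂ) : Prop :=
  ContDiff ℝ (⊤ : ℕ∞) F ∧ ∀ γ : ℂ, inLattice ω₁ ω₂ γ → ∀ z : ℂ,
    F (z + γ) = jfac (-ν) ⟨(1 : Circle), γ⟩ z * jfac (-μ) (ρ ⟨(1 : Circle), γ⟩) (τ z) * F z

/-- The Laguerre polynomial `L_k`. -/
def laguerre (k : ℕ) (x : ℝ) : ℝ :=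
  ∑ j ∈ Finset.range (k + 1), (-1) ^ j * (k.choose j : ℝ) * x ^ j / (Nat.factorial j : ℝ)


/-- The multiplier `χ_τ(γ) = exp(iφ(γ) − 2iμ Im⟨τ(0), ρ([1,γ])⁻¹·0⟩)`. -/
def chiTau (μ : ℝ) (ρ : GT → GT) (τ : ℂ → ℂ) (φ : ℂ → ℝ) (γ : ℂ) : ℂ :=
  Complex.exp (Complex.I * (φ γ : ℂ)
    - 2 * Complex.I * (μ : ℂ) * ((herm (τ 0) (GT.act (ρ ⟨1, γ⟩)⁻¹ 0)).im : ℂ))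

/-- The eigenprojector kernel `K_k`. -/
def Kker (B : ℝ) (φ : ℂ → ℝ) (k : ℕ) (z w : ℂ) : ℂ :=
  ((2 * B / Real.pi : ℝ) : ℂ) * Complex.exp (-Complex.I * ((φ z - φ w : ℝ) : ℂ)) *
    Complex.exp (2 * Complex.I * (B : ℂ) * ((herm z w).im : ℂ)) *
    Complex.exp (-((B * ‖z - w‖ ^ 2 : ℝ) : ℂ)) *
    ((laguerre k (2 * B * ‖z - w‖ ^ 2) : ℝ) : ℂ)

/-- The kernel `K^σ_ξ;k`. -/
def Kxi (σ : ℝ) (ξ : ℂ) (k : ℕ) (z w : ℂ) : ℂ :=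
  ((2 * σ / Real.pi : ℝ) : ℂ) * Complex.exp (2 * Complex.I * ((herm (z - w) ξ).im : ℂ)) *
    Complex.exp (2 * Complex.I * (σ : ℂ) * ((herm z w).im : ℂ)) *
    Complex.exp (-((σ * ‖z - w‖ ^ 2 : ℝ) : ℂ)) *
    ((laguerre k (2 * σ * ‖z - w‖ ^ 2) : ℝ) : ℂ)

/-- `m`-fold iterate of the creation operator `Ã`. -/
def AtopIter (ν μ : ℝ) (τ : ℂ → ℂ) (m : ℕ) (f : ℂ → ℂ) : ℂ → ℂ :=
  (fun u z => Atop ν μ τ u z)^[m] f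

/-
Each factor `j^α` is a cocycle up to a constant phase: since `Im⟨·,·⟩` is antisymmetric and
invariant under rotations,
`Im⟨z, (gg')⁻¹·0⟩ = Im⟨g⁻¹·0, g'·0⟩ + Im⟨g'·z, g⁻¹·0⟩ + Im⟨z, g'⁻¹·0⟩`.
Apply this to `j^ν` at `z` and to `j^μ` at `τ(z)` for the pair `ρ(g), ρ(g')`. Equivariance,
`τ(g'·z) = ρ(g')·τ(z)`, turns the second one into the factor of `J(g, g'·z)`, and the two phases
add up to `φ_ρ(g,g')` because `ρ(g⁻¹) = ρ(g)⁻¹`.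
-/

namespace GT

lemma mul_a (g h : GT) : (g * h).a = g.a * h.a := rfl
lemma mul_b (g h : GT) : (g * h).b = (g.a : ℂ) * h.b + g.b := rfl
lemma inv_a (g : GT) : g⁻¹.a = g.a⁻¹ := rfl
lemma inv_b (g : GT) : g⁻¹.b = -((g.a⁻¹ : ℂ) * g.b) := rfl

end GT

lemma Circle.conj_coe_eq_inv (a : Circle) : (starRingEnd ℂ) (a : ℂ) = (a : ℂ)⁻¹ := by
  rw [← Circle.coe_inv_eq_conj, Circle.coe_inv]

lemma im_herm_act_mul_inv (g g' : GT) (z : ℂ) :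
    (herm z (GT.act (g * g')⁻¹ 0)).im
      = (herm (GT.act g⁻¹ 0) (GT.act g' 0)).im + (herm (GT.act g' z) (GT.act g⁻¹ 0)).im
        + (herm z (GT.act g'⁻¹ 0)).im := by
  apply Complex.ofReal_injective
  push_cast
  simp only [Complex.im_eq_sub_conj, herm, GT.act, GT.mul_a, GT.mul_b, GT.inv_a, GT.inv_b,
    map_neg, map_mul, map_add, map_inv₀, Complex.conj_conj, Circle.conj_coe_eq_inv,
    Circle.coe_mul, Circle.coe_inv, mul_inv_rev, inv_inv, mul_zero, zero_add]
  field_simp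
  ring

lemma jfac_mul (α : ℝ) (g g' : GT) (z : ℂ) :
    jfac α (g * g') z
      = Complex.exp (2 * Complex.I * α * (herm (GT.act g⁻¹ 0) (GT.act g' 0)).im) *
        jfac α g (GT.act g' z) * jfac α g' z := by
  simp only [jfac, ← Complex.exp_add, im_herm_act_mul_inv]
  push_cast
  congr 1
  ring

lemma phiRho_eq (ν μ : ℝ) (ρ : GT →* GT) (g g' : GT) :
    phiRho ν μ ρ g g'
      = ν * (herm (GT.act g⁻¹ 0) (GT.act g' 0)).im
        + μ * (herm (GT.act (ρ g)⁻¹ 0) (GT.act (ρ g') 0)).im := by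
  simp [phiRho, map_inv]

theorem statement4_general (ν μ : ℝ)
    (ρ : GT →* GT) (τ : ℂ → ℂ)
    (hequiv : ∀ (g : GT) (z : ℂ), τ (GT.act g z) = GT.act (ρ g) (τ z))
    (g g' : GT) (z : ℂ) :
    Jfun ν μ (⇑ρ) τ (g * g') z
      = Complex.exp (2 * Complex.I * (phiRho ν μ (⇑ρ) g g' : ℂ)) *
          Jfun ν μ (⇑ρ) τ g (GT.act g' z) * Jfun ν μ (⇑ρ) τ g' z := by
  rw [Jfun, Jfun, Jfun, map_mul, jfac_mul ν, jfac_mul μ, ← hequiv, phiRho_eq]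
  push_cast
  simp only [mul_add, ← mul_assoc, Complex.exp_add]
  ring

theorem statement4 (ν μ : ℝ) (hν : 0 < ν) (hμ : 0 < μ)
    (ρ : GT →* GT) (τ : ℂ → ℂ) (hτ : ContDiff ℝ (⊤ : ℕ∞) τ)
    (hequiv : ∀ (g : GT) (z : ℂ), τ (GT.act g z) = GT.act (ρ g) (τ z))
    (g g' : GT) (z : ℂ) :
    Jfun ν μ (⇑ρ) τ (g * g') z
      = Complex.exp (2 * Complex.I * (phiRho ν μ (⇑ρ) g g' : ℂ)) *
          Jfun ν μ (⇑ρ) τ g (GT.act g' z) * Jfun ν μ (⇑ρ) τ g' z :=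
  statement4_general ν μ ρ τ hequiv g g' z
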